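/- Let u ∈ H¹₀(Ω; ℝ²) for an open set Ω ⊆ ℝ². Then ‖u‖_{L⁴(Ω)} ≤ 2^{1/4} ‖u‖_{L²(Ω)}^{1/2} ‖∇u‖_{L²(Ω)}^{1/2}. -/

import Mathlib

open MeasureTheory Set Function
open scoped ENNReal NNReal


noncomputable section

lemma slice_bound (w : ℝ × ℝ → ℝ) (hw : ContDiff ℝ 1 w) (hw' : HasCompactSupport w)
    (x y : ℝ) :
    (‖w (x, y)‖₊ : ℝ≥0∞) ≤ ∫⁻ t, ‖fderiv ℝ w (t, y) (1, 0)‖₊ := by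
  set h : ℝ → ℝ := fun t => w (t, y) with hh
  have hiso : Isometry (fun t : ℝ => (t, y)) := by
    apply Isometry.of_dist_eq
    intro a b
    simp [Prod.dist_eq, dist_comm, dist_nonneg]
  have hch : ContDiff ℝ 1 h := hw.comp (contDiff_id.prodMk contDiff_const)
  have hcs : HasCompactSupport h := hw'.comp_isClosedEmbedding hiso.isClosedEmbedding
  have hderiv : ∀ t, deriv h t = fderiv ℝ w (t, y) (1, 0) := by
    intro t
    have h1 : HasDerivAt (fun t : ℝ => (t, y)) ((1 : ℝ), (0 : ℝ)) t :=
      (hasDerivAt_id t).prodMk (hasDerivAt_const t y)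
    have h2 : HasFDerivAt w (fderiv ℝ w (t, y)) (t, y) :=
      (hw.differentiable one_ne_zero (t, y)).hasFDerivAt
    exact (h2.comp_hasDerivAt t h1).deriv
  calc (‖w (x, y)‖₊ : ℝ≥0∞) = ‖h x‖₊ := rfl
    _ ≤ ∫⁻ t in Iic x, ‖deriv h t‖₊ := hcs.enorm_le_lintegral_Ici_deriv hch x
    _ ≤ ∫⁻ t, ‖deriv h t‖₊ := setLIntegral_le_lintegral _ _
    _ = ∫⁻ t, ‖fderiv ℝ w (t, y) (1, 0)‖₊ := by simp_rw [hderiv]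

lemma slice_bound' (w : ℝ × ℝ → ℝ) (hw : ContDiff ℝ 1 w) (hw' : HasCompactSupport w)
    (x y : ℝ) :
    (‖w (x, y)‖₊ : ℝ≥0∞) ≤ ∫⁻ s, ‖fderiv ℝ w (x, s) (0, 1)‖₊ := by
  set h : ℝ → ℝ := fun s => w (x, s) with hh
  have hiso : Isometry (fun s : ℝ => (x, s)) := by
    apply Isometry.of_dist_eq
    intro a b
    simp [Prod.dist_eq, dist_comm, dist_nonneg]
  have hch : ContDiff ℝ 1 h := hw.comp (contDiff_const.prodMk contDiff_id)
  have hcs : HasCompactSupport h := hw'.comp_isClosedEmbedding hiso.isClosedEmbedding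
  have hderiv : ∀ s, deriv h s = fderiv ℝ w (x, s) (0, 1) := by
    intro s
    have h1 : HasDerivAt (fun s : ℝ => (x, s)) ((0 : ℝ), (1 : ℝ)) s :=
      (hasDerivAt_const s x).prodMk (hasDerivAt_id s)
    have h2 : HasFDerivAt w (fderiv ℝ w (x, s)) (x, s) :=
      (hw.differentiable one_ne_zero (x, s)).hasFDerivAt
    exact (h2.comp_hasDerivAt s h1).deriv
  calc (‖w (x, y)‖₊ : ℝ≥0∞) = ‖h y‖₊ := rfl
    _ ≤ ∫⁻ s in Iic y, ‖deriv h s‖₊ := hcs.enorm_le_lintegral_Ici_deriv hch y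
    _ ≤ ∫⁻ s, ‖deriv h s‖₊ := setLIntegral_le_lintegral _ _
    _ = ∫⁻ s, ‖fderiv ℝ w (x, s) (0, 1)‖₊ := by simp_rw [hderiv]

lemma core_lintegral (w : ℝ × ℝ → ℝ) (hw : ContDiff ℝ 1 w) (hw' : HasCompactSupport w) :
    ∫⁻ p, (‖w p‖₊ : ℝ≥0∞) ^ 2
      ≤ (∫⁻ p, (‖fderiv ℝ w p (1, 0)‖₊ : ℝ≥0∞)) * ∫⁻ p, (‖fderiv ℝ w p (0, 1)‖₊ : ℝ≥0∞) := by
  have hfc : Continuous (fderiv ℝ w) := hw.continuous_fderiv one_ne_zero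
  have hg1 : Measurable fun p : ℝ × ℝ => (‖fderiv ℝ w p (1, 0)‖₊ : ℝ≥0∞) := by
    apply Measurable.coe_nnreal_ennreal
    exact ((hfc.clm_apply continuous_const).nnnorm).measurable
  have hg2 : Measurable fun p : ℝ × ℝ => (‖fderiv ℝ w p (0, 1)‖₊ : ℝ≥0∞) := by
    apply Measurable.coe_nnreal_ennreal
    exact ((hfc.clm_apply continuous_const).nnnorm).measurable
  set F : ℝ → ℝ≥0∞ := fun x => ∫⁻ s, ‖fderiv ℝ w (x, s) (0, 1)‖₊ with hF
  set G : ℝ → ℝ≥0∞ := fun y => ∫⁻ t, ‖fderiv ℝ w (t, y) (1, 0)‖₊ with hG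
  have hFm : Measurable F := by
    apply Measurable.lintegral_prod_right (f := fun x s => (‖fderiv ℝ w (x, s) (0, 1)‖₊ : ℝ≥0∞))
    exact hg2
  have hGm : Measurable G := by
    apply Measurable.lintegral_prod_left (f := fun t y => (‖fderiv ℝ w (t, y) (1, 0)‖₊ : ℝ≥0∞))
    exact hg1
  have step1 : ∫⁻ p, (‖w p‖₊ : ℝ≥0∞) ^ 2 ≤ ∫⁻ p : ℝ × ℝ, F p.1 * G p.2 := by
    apply lintegral_mono
    rintro ⟨x, y⟩
    have b1 := slice_bound w hw hw' x y
    have b2 := slice_bound' w hw hw' x y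
    calc (‖w (x, y)‖₊ : ℝ≥0∞) ^ 2 = (‖w (x, y)‖₊ : ℝ≥0∞) * ‖w (x, y)‖₊ := sq _
      _ ≤ F x * G y := mul_le_mul' b2 b1
  have step2 : ∫⁻ p : ℝ × ℝ, F p.1 * G p.2 = (∫⁻ x, F x) * ∫⁻ y, G y := by
    rw [Measure.volume_eq_prod]
    exact lintegral_prod_mul hFm.aemeasurable hGm.aemeasurable
  have step3 : ∫⁻ x, F x = ∫⁻ p, (‖fderiv ℝ w p (0, 1)‖₊ : ℝ≥0∞) := by
    rw [hF]
    conv_rhs => rw [Measure.volume_eq_prod, lintegral_prod _ hg2.aemeasurable]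
  have step4 : ∫⁻ y, G y = ∫⁻ p, (‖fderiv ℝ w p (1, 0)‖₊ : ℝ≥0∞) := by
    rw [hG]
    conv_rhs => rw [Measure.volume_eq_prod, lintegral_prod_symm _ hg1.aemeasurable]
  rw [step3, step4] at step2
  exact step1.trans_eq (step2.trans (mul_comm _ _))

variable {E' : Type*} [NormedAddCommGroup E'] [InnerProductSpace ℝ E']

lemma fderiv_norm_sq_bound (v : ℝ × ℝ → E') (hv : ContDiff ℝ (⊤ : ℕ∞) v) (p : ℝ × ℝ) (e : ℝ × ℝ) :
    |fderiv ℝ (fun q => ‖v q‖ ^ 2) p e| ≤ 2 * ‖v p‖ * ‖fderiv ℝ v p e‖ := by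
  have hd : DifferentiableAt ℝ v p := hv.differentiable (by simp) p
  have h1 : fderiv ℝ (fun q => ‖v q‖ ^ 2) p e
      = inner ℝ (v p) (fderiv ℝ v p e) + inner ℝ (fderiv ℝ v p e) (v p) := by
    have : (fun q => ‖v q‖ ^ 2) = fun q => (inner ℝ (v q) (v q) : ℝ) := by
      funext q; rw [real_inner_self_eq_norm_sq]
    rw [this, fderiv_inner_apply (𝕜 := ℝ) hd hd]
  rw [h1]
  have h2 : |(inner ℝ (v p) (fderiv ℝ v p e) : ℝ)| ≤ ‖v p‖ * ‖fderiv ℝ v p e‖ :=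
    abs_real_inner_le_norm _ _
  have h3 : |(inner ℝ (fderiv ℝ v p e) (v p) : ℝ)| ≤ ‖fderiv ℝ v p e‖ * ‖v p‖ :=
    abs_real_inner_le_norm _ _
  calc |(inner ℝ (v p) (fderiv ℝ v p e) : ℝ) + inner ℝ (fderiv ℝ v p e) (v p)|
      ≤ |(inner ℝ (v p) (fderiv ℝ v p e) : ℝ)| + |(inner ℝ (fderiv ℝ v p e) (v p) : ℝ)| := abs_add_le _ _
    _ ≤ 2 * ‖v p‖ * ‖fderiv ℝ v p e‖ := by nlinarith

set_option maxHeartbeats 2000000 in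
lemma core_real (v : ℝ × ℝ → E') (hv : ContDiff ℝ (⊤ : ℕ∞) v) (hv' : HasCompactSupport v) :
    ∫ p, ‖v p‖ ^ 4
      ≤ 2 * (∫ p, ‖v p‖ ^ 2)
          * ∫ p, (‖fderiv ℝ v p (1, 0)‖ ^ 2 + ‖fderiv ℝ v p (0, 1)‖ ^ 2) := by
  set w : ℝ × ℝ → ℝ := fun p => ‖v p‖ ^ 2 with hwdef
  have hwsm : ContDiff ℝ (⊤ : ℕ∞) w := hv.norm_sq (𝕜 := ℝ)
  have hw1 : ContDiff ℝ 1 w := hwsm.of_le (by simp)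
  have hw' : HasCompactSupport w := hv'.comp_left (g := fun z : E' => ‖z‖ ^ 2) (by simp)
  set d1 : ℝ × ℝ → E' := fun p => fderiv ℝ v p (1, 0) with hd1def
  set d2 : ℝ × ℝ → E' := fun p => fderiv ℝ v p (0, 1) with hd2def
  have hd1c : Continuous d1 := (hv.continuous_fderiv (by simp)).clm_apply continuous_const
  have hd2c : Continuous d2 := (hv.continuous_fderiv (by simp)).clm_apply continuous_const
  have hd1s : HasCompactSupport d1 :=
    (hv'.fderiv ℝ).comp_left (g := fun L : (ℝ × ℝ) →L[ℝ] E' => L (1, 0)) rfl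
  have hd2s : HasCompactSupport d2 :=
    (hv'.fderiv ℝ).comp_left (g := fun L : (ℝ × ℝ) →L[ℝ] E' => L (0, 1)) rfl
  set e1 : ℝ × ℝ → ℝ := fun p => fderiv ℝ w p (1, 0) with he1def
  set e2 : ℝ × ℝ → ℝ := fun p => fderiv ℝ w p (0, 1) with he2def
  have he1c : Continuous e1 := (hwsm.continuous_fderiv (by simp)).clm_apply continuous_const
  have he2c : Continuous e2 := (hwsm.continuous_fderiv (by simp)).clm_apply continuous_const
  have he1s : HasCompactSupport e1 :=
    (hw'.fderiv ℝ).comp_left (g := fun L : (ℝ × ℝ) →L[ℝ] ℝ => L (1, 0)) rfl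
  have he2s : HasCompactSupport e2 :=
    (hw'.fderiv ℝ).comp_left (g := fun L : (ℝ × ℝ) →L[ℝ] ℝ => L (0, 1)) rfl
  have ie1 : Integrable e1 := he1c.integrable_of_hasCompactSupport he1s
  have ie2 : Integrable e2 := he2c.integrable_of_hasCompactSupport he2s
  -- lintegral inequality transferred to reals
  have key := core_lintegral w hw1 hw'
  have hL : ∫ p, ‖v p‖ ^ 4 = (∫⁻ p, ((‖w p‖₊ : ℝ≥0∞)) ^ 2).toReal := by
    rw [MeasureTheory.integral_eq_lintegral_of_nonneg_ae (f := fun p => ‖v p‖ ^ 4)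
      (Filter.Eventually.of_forall fun p => by positivity)
      ((hv.continuous.norm.pow 4).aestronglyMeasurable)]
    congr 1
    apply lintegral_congr
    intro p
    rw [← enorm_eq_nnnorm, ← ofReal_norm_eq_enorm, ← ENNReal.ofReal_pow (norm_nonneg _)]
    congr 1
    have h2 : ‖w p‖ = ‖v p‖ ^ 2 := by
      rw [Real.norm_eq_abs, abs_of_nonneg (by positivity)]
    rw [h2]; ring
  have hR1 : (∫⁻ p, (‖e1 p‖₊ : ℝ≥0∞)) = ENNReal.ofReal (∫ p, |e1 p|) := by
    simp only [← enorm_eq_nnnorm]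
    rw [← ofReal_integral_norm_eq_lintegral_enorm ie1]
    simp [Real.norm_eq_abs]
  have hR2 : (∫⁻ p, (‖e2 p‖₊ : ℝ≥0∞)) = ENNReal.ofReal (∫ p, |e2 p|) := by
    simp only [← enorm_eq_nnnorm]
    rw [← ofReal_integral_norm_eq_lintegral_enorm ie2]
    simp [Real.norm_eq_abs]
  have hI1 : (0:ℝ) ≤ ∫ p, |e1 p| := integral_nonneg fun p => abs_nonneg _
  have hI2 : (0:ℝ) ≤ ∫ p, |e2 p| := integral_nonneg fun p => abs_nonneg _
  have main1 : ∫ p, ‖v p‖ ^ 4 ≤ (∫ p, |e1 p|) * ∫ p, |e2 p| := by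
    rw [hL]
    have : (∫⁻ p, ((‖w p‖₊ : ℝ≥0∞)) ^ 2)
        ≤ ENNReal.ofReal ((∫ p, |e1 p|) * ∫ p, |e2 p|) := by
      rw [ENNReal.ofReal_mul hI1, ← hR1, ← hR2]
      exact key
    calc (∫⁻ p, ((‖w p‖₊ : ℝ≥0∞)) ^ 2).toReal
        ≤ (ENNReal.ofReal ((∫ p, |e1 p|) * ∫ p, |e2 p|)).toReal :=
          ENNReal.toReal_mono ENNReal.ofReal_ne_top this
      _ = (∫ p, |e1 p|) * ∫ p, |e2 p| := ENNReal.toReal_ofReal (by positivity)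
  -- bound ∫|e_j| by 2 ∫ ‖v‖ ‖d_j‖
  have bound1 : ∫ p, |e1 p| ≤ 2 * ∫ p, ‖v p‖ * ‖d1 p‖ := by
    rw [← integral_const_mul]
    have imul1 : Integrable (fun p : ℝ × ℝ => ‖v p‖ * ‖d1 p‖) :=
      (hv.continuous.norm.mul hd1c.norm).integrable_of_hasCompactSupport hv'.norm.mul_right
    apply integral_mono ie1.abs (imul1.const_mul 2)
    intro p
    have := fderiv_norm_sq_bound v hv p (1, 0)
    simpa [mul_assoc] using this
  have bound2 : ∫ p, |e2 p| ≤ 2 * ∫ p, ‖v p‖ * ‖d2 p‖ := by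
    rw [← integral_const_mul]
    have imul2 : Integrable (fun p : ℝ × ℝ => ‖v p‖ * ‖d2 p‖) :=
      (hv.continuous.norm.mul hd2c.norm).integrable_of_hasCompactSupport hv'.norm.mul_right
    apply integral_mono ie2.abs (imul2.const_mul 2)
    intro p
    have := fderiv_norm_sq_bound v hv p (0, 1)
    simpa [mul_assoc] using this
  -- Cauchy-Schwarz
  have hpq : Real.HolderConjugate 2 2 := ⟨by norm_num, by norm_num, by norm_num⟩
  have hof : ENNReal.ofReal (2:ℝ) = 2 := by norm_num
  have mem_v : MemLp (fun p : ℝ × ℝ => ‖v p‖) (ENNReal.ofReal 2) :=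
    hv.continuous.norm.memLp_of_hasCompactSupport hv'.norm
  have mem_d1 : MemLp (fun p : ℝ × ℝ => ‖d1 p‖) (ENNReal.ofReal 2) :=
    hd1c.norm.memLp_of_hasCompactSupport hd1s.norm
  have mem_d2 : MemLp (fun p : ℝ × ℝ => ‖d2 p‖) (ENNReal.ofReal 2) :=
    hd2c.norm.memLp_of_hasCompactSupport hd2s.norm
  have cs1 : ∫ p, ‖v p‖ * ‖d1 p‖
      ≤ (∫ p, ‖v p‖ ^ (2:ℝ)) ^ ((1:ℝ)/2) * (∫ p, ‖d1 p‖ ^ (2:ℝ)) ^ ((1:ℝ)/2) :=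
    integral_mul_le_Lp_mul_Lq_of_nonneg hpq
      (Filter.Eventually.of_forall fun p => norm_nonneg _)
      (Filter.Eventually.of_forall fun p => norm_nonneg _) mem_v mem_d1
  have cs2 : ∫ p, ‖v p‖ * ‖d2 p‖
      ≤ (∫ p, ‖v p‖ ^ (2:ℝ)) ^ ((1:ℝ)/2) * (∫ p, ‖d2 p‖ ^ (2:ℝ)) ^ ((1:ℝ)/2) :=
    integral_mul_le_Lp_mul_Lq_of_nonneg hpq
      (Filter.Eventually.of_forall fun p => norm_nonneg _)
      (Filter.Eventually.of_forall fun p => norm_nonneg _) mem_v mem_d2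
  have hrpow : ∀ x : ℝ, 0 ≤ x → x ^ (2:ℝ) = x ^ 2 := by
    intro x hx
    rw [show (2:ℝ) = ((2:ℕ):ℝ) by norm_num, Real.rpow_natCast]
  have hev : (∫ p, ‖v p‖ ^ (2:ℝ)) = ∫ p, ‖v p‖ ^ 2 :=
    integral_congr_ae (Filter.Eventually.of_forall fun p => hrpow _ (norm_nonneg _))
  have hed1 : (∫ p, ‖d1 p‖ ^ (2:ℝ)) = ∫ p, ‖d1 p‖ ^ 2 :=
    integral_congr_ae (Filter.Eventually.of_forall fun p => hrpow _ (norm_nonneg _))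
  have hed2 : (∫ p, ‖d2 p‖ ^ (2:ℝ)) = ∫ p, ‖d2 p‖ ^ 2 :=
    integral_congr_ae (Filter.Eventually.of_forall fun p => hrpow _ (norm_nonneg _))
  rw [hev, hed1] at cs1
  rw [hev, hed2] at cs2
  set A : ℝ := ∫ p, ‖v p‖ ^ 2 with hA
  set B1 : ℝ := ∫ p, ‖d1 p‖ ^ 2 with hB1
  set B2 : ℝ := ∫ p, ‖d2 p‖ ^ 2 with hB2
  have hAnn : 0 ≤ A := integral_nonneg fun p => by positivity
  have hB1nn : 0 ≤ B1 := integral_nonneg fun p => by positivity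
  have hB2nn : 0 ≤ B2 := integral_nonneg fun p => by positivity
  set a : ℝ := A ^ ((1:ℝ)/2) with ha
  set b1 : ℝ := B1 ^ ((1:ℝ)/2) with hb1
  set b2 : ℝ := B2 ^ ((1:ℝ)/2) with hb2
  have hann : 0 ≤ a := Real.rpow_nonneg hAnn _
  have hb1nn : 0 ≤ b1 := Real.rpow_nonneg hB1nn _
  have hb2nn : 0 ≤ b2 := Real.rpow_nonneg hB2nn _
  have haa : a * a = A := by
    rw [ha, ← Real.rpow_add' hAnn (by norm_num)]
    norm_num
  have hbb1 : b1 * b1 = B1 := by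
    rw [hb1, ← Real.rpow_add' hB1nn (by norm_num)]
    norm_num
  have hbb2 : b2 * b2 = B2 := by
    rw [hb2, ← Real.rpow_add' hB2nn (by norm_num)]
    norm_num
  -- integrability for splitting the sum
  have iB1 : Integrable (fun p : ℝ × ℝ => ‖d1 p‖ ^ 2) :=
    (hd1c.norm.pow 2).integrable_of_hasCompactSupport
      (by simpa only [Function.comp_def, Pi.pow_def] using hd1s.comp_left (g := fun z : E' => ‖z‖ ^ 2) (by simp))
  have iB2 : Integrable (fun p : ℝ × ℝ => ‖d2 p‖ ^ 2) :=
    (hd2c.norm.pow 2).integrable_of_hasCompactSupport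
      (by simpa only [Function.comp_def, Pi.pow_def] using hd2s.comp_left (g := fun z : E' => ‖z‖ ^ 2) (by simp))
  have hsum : (∫ p, (‖fderiv ℝ v p (1, 0)‖ ^ 2 + ‖fderiv ℝ v p (0, 1)‖ ^ 2)) = B1 + B2 :=
    integral_add iB1 iB2
  rw [hsum]
  have hm1 : (0:ℝ) ≤ ∫ p, ‖v p‖ * ‖d1 p‖ := integral_nonneg fun p => by positivity
  have hm2 : (0:ℝ) ≤ ∫ p, ‖v p‖ * ‖d2 p‖ := integral_nonneg fun p => by positivity
  nlinarith [main1, bound1, bound2, cs1, cs2, mul_le_mul bound1 bound2 hI2 (by nlinarith),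
    mul_le_mul cs1 cs2 hm2 (by positivity), sq_nonneg (b1 - b2),
    mul_nonneg (mul_nonneg hann hb1nn) (mul_nonneg hann hb2nn)]

/-- Ladyzhenskaya's inequality in two dimensions,
`‖u‖_{L⁴} ≤ 2^{1/4} ‖u‖_{L²}^{1/2} ‖∇u‖_{L²}^{1/2}`,
stated for the smooth compactly supported functions whose closure in `H¹` is `H¹₀(Ω;ℝ²)`. -/
theorem ladyzhenskaya_2d (Ω : Set (EuclideanSpace ℝ (Fin 2))) (hΩ : IsOpen Ω)
    (u : EuclideanSpace ℝ (Fin 2) → EuclideanSpace ℝ (Fin 2))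
    (hu : ContDiff ℝ (⊤ : ℕ∞) u) (hsupp : HasCompactSupport u) (hsub : tsupport u ⊆ Ω) :
    (∫ x in Ω, ‖u x‖ ^ 4) ^ ((1 : ℝ) / 4)
      ≤ (2 : ℝ) ^ ((1 : ℝ) / 4) * (∫ x in Ω, ‖u x‖ ^ 2) ^ ((1 : ℝ) / 4)
          * (∫ x in Ω,
              ∑ i : Fin 2, ‖fderiv ℝ u x (EuclideanSpace.single i 1)‖ ^ 2) ^ ((1 : ℝ) / 4) := by
  classical
  -- replace set integrals by integrals over the whole space
  have hzero : ∀ x, x ∉ Ω → u x = 0 := fun x hx =>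
    image_eq_zero_of_notMem_tsupport (fun hx' => hx (hsub hx'))
  have hdzero : ∀ x, x ∉ Ω → fderiv ℝ u x = 0 := by
    intro x hx
    by_contra h
    exact hx (hsub (support_fderiv_subset ℝ (Function.mem_support.2 h)))
  have h4 : (∫ x in Ω, ‖u x‖ ^ 4) = ∫ x, ‖u x‖ ^ 4 :=
    setIntegral_eq_integral_of_forall_compl_eq_zero fun x hx => by rw [hzero x hx]; simp
  have h2 : (∫ x in Ω, ‖u x‖ ^ 2) = ∫ x, ‖u x‖ ^ 2 :=
    setIntegral_eq_integral_of_forall_compl_eq_zero fun x hx => by rw [hzero x hx]; simp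
  have hgr : (∫ x in Ω, ∑ i : Fin 2, ‖fderiv ℝ u x (EuclideanSpace.single i 1)‖ ^ 2)
      = ∫ x, ∑ i : Fin 2, ‖fderiv ℝ u x (EuclideanSpace.single i 1)‖ ^ 2 :=
    setIntegral_eq_integral_of_forall_compl_eq_zero fun x hx => by rw [hdzero x hx]; simp
  rw [h4, h2, hgr]
  -- the identification of ℝ × ℝ with the Euclidean plane
  set ψ : (ℝ × ℝ) ≃L[ℝ] EuclideanSpace ℝ (Fin 2) :=
    (ContinuousLinearEquiv.finTwoArrow ℝ ℝ).symm.trans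
      (EuclideanSpace.equiv (Fin 2) ℝ).symm with hψdef
  have hψmp : MeasurePreserving (⇑ψ) := by
    have h1 : MeasurePreserving (MeasurableEquiv.finTwoArrow (α := ℝ)).symm :=
      (volume_preserving_finTwoArrow ℝ).symm
    have h2 : MeasurePreserving (MeasurableEquiv.toLp 2 (Fin 2 → ℝ)) :=
      (EuclideanSpace.volume_preserving_symm_measurableEquiv_toLp (Fin 2)).symm
    have : (⇑ψ) = (MeasurableEquiv.toLp 2 (Fin 2 → ℝ)) ∘
        (MeasurableEquiv.finTwoArrow (α := ℝ)).symm := by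
      rfl
    rw [this]
    exact h2.comp h1
  have hψemb : MeasurableEmbedding (⇑ψ) :=
    (MeasurableEquiv.finTwoArrow.symm.trans
      (MeasurableEquiv.toLp 2 (Fin 2 → ℝ))).measurableEmbedding
  set v : ℝ × ℝ → EuclideanSpace ℝ (Fin 2) := fun p => u (ψ p) with hvdef
  have hv : ContDiff ℝ (⊤ : ℕ∞) v := hu.comp ψ.contDiff
  have hv' : HasCompactSupport v :=
    hsupp.comp_isClosedEmbedding ψ.toHomeomorph.isClosedEmbedding
  have he1 : ψ ((1 : ℝ), (0 : ℝ)) = EuclideanSpace.single (0 : Fin 2) (1 : ℝ) := by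
    apply PiLp.ext
    intro j
    fin_cases j <;> simp [ψ, EuclideanSpace.single_apply]
  have he2 : ψ ((0 : ℝ), (1 : ℝ)) = EuclideanSpace.single (1 : Fin 2) (1 : ℝ) := by
    apply PiLp.ext
    intro j
    fin_cases j <;> simp [ψ, EuclideanSpace.single_apply]
  have hchain : ∀ p e, fderiv ℝ v p e = fderiv ℝ u (ψ p) (ψ e) := by
    intro p e
    have hdu : DifferentiableAt ℝ u (ψ p) := hu.differentiable (by simp) (ψ p)
    have : fderiv ℝ v p = (fderiv ℝ u (ψ p)).comp (ψ : (ℝ × ℝ) →L[ℝ] _) := by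
      rw [hvdef]
      have := fderiv_comp p hdu (ψ.differentiableAt)
      rw [show (fun p => u (ψ p)) = u ∘ ψ from rfl, this, ψ.fderiv]
    rw [this]; rfl
  have k4 : ∫ p, ‖v p‖ ^ 4 = ∫ x, ‖u x‖ ^ 4 :=
    hψmp.integral_comp hψemb fun x => ‖u x‖ ^ 4
  have k2 : ∫ p, ‖v p‖ ^ 2 = ∫ x, ‖u x‖ ^ 2 :=
    hψmp.integral_comp hψemb fun x => ‖u x‖ ^ 2
  have kg : (∫ p, (‖fderiv ℝ v p (1, 0)‖ ^ 2 + ‖fderiv ℝ v p (0, 1)‖ ^ 2))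
      = ∫ x, ∑ i : Fin 2, ‖fderiv ℝ u x (EuclideanSpace.single i 1)‖ ^ 2 := by
    have : ∀ p : ℝ × ℝ, (‖fderiv ℝ v p (1, 0)‖ ^ 2 + ‖fderiv ℝ v p (0, 1)‖ ^ 2)
        = (fun x => ∑ i : Fin 2, ‖fderiv ℝ u x (EuclideanSpace.single i 1)‖ ^ 2) (ψ p) := by
      intro p
      rw [hchain p (1, 0), hchain p (0, 1), he1, he2]
      simp [Fin.sum_univ_two]
    rw [integral_congr_ae (Filter.Eventually.of_forall this)]
    simpa using hψmp.integral_comp hψemb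
      (fun x => ∑ i : Fin 2, ‖fderiv ℝ u x (EuclideanSpace.single i 1)‖ ^ 2)
  have main := core_real v hv hv'
  rw [k4, k2, kg] at main
  -- numerical conclusion
  set J : ℝ := ∫ x, ‖u x‖ ^ 4 with hJ
  set A : ℝ := ∫ x, ‖u x‖ ^ 2 with hA
  set B : ℝ := ∫ x, ∑ i : Fin 2, ‖fderiv ℝ u x (EuclideanSpace.single i 1)‖ ^ 2 with hB
  have hJnn : 0 ≤ J := integral_nonneg fun x => by positivity
  have hAnn : 0 ≤ A := integral_nonneg fun x => by positivity
  have hBnn : 0 ≤ B := integral_nonneg fun x => by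
    apply Finset.sum_nonneg; intro i _; positivity
  calc J ^ ((1:ℝ)/4) ≤ (2 * A * B) ^ ((1:ℝ)/4) :=
        Real.rpow_le_rpow hJnn main (by norm_num)
    _ = (2:ℝ) ^ ((1:ℝ)/4) * A ^ ((1:ℝ)/4) * B ^ ((1:ℝ)/4) := by
        rw [Real.mul_rpow (by positivity) hBnn, Real.mul_rpow (by norm_num) hAnn]

end
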